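/- arXiv:2111.12237 — 2 statements merged into one kernel-verified Lean document; each statement's English description precedes it below -/
import Mathlib

section
/- Assume V ≥ p(S) and condition (SOLV). Then every pure strategy Nash equilibrium K of the Liquidity Event game is ≈-equivalent to a threshold Nash equilibrium: there exists a real number c such that the profile K_c = {k ∈ S : γ_k ≥ c} is a pure strategy Nash equilibrium and U_i(K) = U_i(K_c) for all i ∈ S. -/
open Finset

variable {ι : Type*} [DecidableEq ι]

/-- `f(X) = β + Σ_{i ∈ X} α_i`. -/
noncomputable def fval (β : ℝ) (α : ι → ℝ) (X : Finset ι) : ℝ := β + ∑ i ∈ X, α i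

/-- `p(X) = Σ_{i ∈ X} p_i`. -/
noncomputable def psum (p : ι → ℝ) (X : Finset ι) : ℝ := ∑ i ∈ X, p i

/-- The payout `U_i(K)` in the Liquidity Event game, where `K ⊆ S` is the set of players
who cash out.  For `i ∈ K` it is `p_i` if `p(K) ≤ V` and the pro-rata `p_i·V/p(K)` otherwise;
for a converting player `i ∈ S \ K` it is `(p_i/(γ_i·f(S\K)))·(V − P(K))`
where `P(K) = min(p(K), V)` is the total cashout payment. -/
noncomputable def payout (S : Finset ι) (V β : ℝ) (p γ α : ι → ℝ)
    (K : Finset ι) (i : ι) : ℝ :=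
  if i ∈ K then (if psum p K ≤ V then p i else p i * V / psum p K)
  else (p i / (γ i * fval β α (S \ K))) * (V - min (psum p K) V)

/-- The profile obtained from `K` when player `i` unilaterally changes their move. -/
def deviate (K : Finset ι) (i : ι) : Finset ι := if i ∈ K then K.erase i else insert i K

/-- `K` is a pure strategy Nash equilibrium of the Liquidity Event game. -/
def isNash (S : Finset ι) (V β : ℝ) (p γ α : ι → ℝ) (K : Finset ι) : Prop :=
  K ⊆ S ∧ ∀ i ∈ S, payout S V β p γ α (deviate K i) i ≤ payout S V β p γ α K i

/-- `g(K) = (V − p(K)) / f(S \ K)`. -/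
noncomputable def gval (S : Finset ι) (V β : ℝ) (p α : ι → ℝ) (K : Finset ι) : ℝ :=
  (V - psum p K) / fval β α (S \ K)

/-- Condition (WD): for every nonempty `C ⊆ S`, `Σ_{i∈C} p_i/(γ_i·f(C)) < 1`. -/
def WD (S : Finset ι) (β : ℝ) (p γ α : ι → ℝ) : Prop :=
  ∀ C ⊆ S, C.Nonempty → ∑ i ∈ C, p i / (γ i * fval β α C) < 1

lemma aux_sdiff_erase (S K : Finset ι) (i : ι) (hi : i ∈ S) :
    S \ K.erase i = insert i (S \ K) := by
  ext x
  simp only [mem_sdiff, mem_erase, mem_insert]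
  constructor
  · rintro ⟨hxS, hx⟩
    by_cases hxi : x = i
    · exact Or.inl hxi
    · exact Or.inr ⟨hxS, fun hxK => hx ⟨hxi, hxK⟩⟩
  · rintro (rfl | ⟨hxS, hxK⟩)
    · exact ⟨hi, fun h => h.1 rfl⟩
    · exact ⟨hxS, fun h => hxK h.2⟩

lemma psum_erase (p : ι → ℝ) (K : Finset ι) (i : ι) (h : i ∈ K) :
    psum p (K.erase i) = psum p K - p i :=
  Finset.sum_erase_eq_sub h

lemma psum_insert (p : ι → ℝ) (K : Finset ι) (i : ι) (h : i ∉ K) :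
    psum p (insert i K) = p i + psum p K :=
  Finset.sum_insert h

lemma payout_mem_eq (S : Finset ι) (V β : ℝ) (p γ α : ι → ℝ) (K : Finset ι) (i : ι)
    (hi : i ∈ K) (h : psum p K ≤ V) : payout S V β p γ α K i = p i := by
  simp [payout, hi, h]

lemma payout_not_mem_eq (S : Finset ι) (V β : ℝ) (p γ α : ι → ℝ) (K : Finset ι) (i : ι)
    (hi : i ∉ K) (h : psum p K ≤ V) :
    payout S V β p γ α K i = p i / (γ i * fval β α (S \ K)) * (V - psum p K) := by
  simp [payout, hi, min_eq_left h]

/-- under `V ≥ p(S)` and (SOLV), every Nash equilibrium is ≈-equivalent to a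
threshold Nash equilibrium `K_c = {k : γ_k ≥ c}`. -/
theorem stmt12_nash_equiv_threshold
    (S : Finset ι) (hS : S.Nonempty)
    (V β : ℝ) (hV : 0 < V) (hβ : 0 < β)
    (p γ α : ι → ℝ)
    (hp : ∀ i ∈ S, 0 < p i) (hγ : ∀ i ∈ S, 0 < γ i) (hα : ∀ i ∈ S, 0 ≤ α i)
    (hge : psum p S ≤ V)
    (hsolv : ∀ i ∈ S, γ i * α i ≤ p i) :
    ∀ K : Finset ι, isNash S V β p γ α K →
      ∃ c : ℝ, isNash S V β p γ α (S.filter (fun k => c ≤ γ k)) ∧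
        ∀ i ∈ S, payout S V β p γ α K i
            = payout S V β p γ α (S.filter (fun k => c ≤ γ k)) i := by
  intro K hK
  obtain ⟨hKS, hNash⟩ := hK
  have hpn : ∀ i ∈ S, 0 ≤ p i := fun i hi => (hp i hi).le
  have hsum_le : ∀ W ⊆ S, psum p W ≤ V := by
    intro W hW
    refine le_trans ?_ hge
    exact Finset.sum_le_sum_of_subset_of_nonneg hW (fun i hi _ => hpn i hi)
  have hpK : psum p K ≤ V := hsum_le K hKS
  have hfval_pos : ∀ X ⊆ S, 0 < fval β α X := by
    intro X hX
    have h0 : 0 ≤ ∑ i ∈ X, α i := Finset.sum_nonneg fun i hi => hα i (hX hi)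
    unfold fval; linarith
  set fK := fval β α (S \ K) with hfKdef
  have hfK : 0 < fK := hfval_pos _ sdiff_subset
  set g := (V - psum p K) / fK with hgdef
  have hg0 : 0 ≤ g := div_nonneg (by linarith) hfK.le
  have hVK : V - psum p K = g * fK := by
    rw [hgdef, div_mul_cancel₀ _ hfK.ne']
  -- Nash inequality for cash-out players
  have hcash : ∀ i ∈ K, g * fK + p i ≤ γ i * (fK + α i) := by
    intro i hi
    have hiS := hKS hi
    have hpi := hp i hiS
    have hdev : deviate K i = K.erase i := if_pos hi
    have h1 : payout S V β p γ α K i = p i := payout_mem_eq _ _ _ _ _ _ _ _ hi hpK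
    have herase : psum p (K.erase i) = psum p K - p i := psum_erase p K i hi
    have hins : fval β α (insert i (S \ K)) = α i + fK := by
      unfold fval
      rw [Finset.sum_insert (by simp [hi])]
      rw [hfKdef]; unfold fval; ring
    have h2 : payout S V β p γ α (K.erase i) i
        = p i / (γ i * (α i + fK)) * (V - (psum p K - p i)) := by
      rw [payout_not_mem_eq _ _ _ _ _ _ _ _ (notMem_erase i K)
        (by rw [herase]; linarith), herase, aux_sdiff_erase S K i hiS, hins]
    have hle := hNash i hiS
    rw [hdev, h1, h2] at hle
    have hD : 0 < γ i * (α i + fK) := mul_pos (hγ i hiS) (by have := hα i hiS; linarith)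
    rw [div_mul_eq_mul_div, div_le_iff₀ hD] at hle
    have h3 := le_of_mul_le_mul_left hle hpi
    have hgoal : V - (psum p K - p i) = g * fK + p i := by linarith
    rw [hgoal] at h3
    nlinarith [h3]
  -- Nash inequality for converters
  have hconv : ∀ i ∈ S, i ∉ K → γ i ≤ g := by
    intro i hiS hiK
    have hdev : deviate K i = insert i K := if_neg hiK
    have hsub : insert i K ⊆ S := insert_subset hiS hKS
    have h2 : payout S V β p γ α (insert i K) i = p i :=
      payout_mem_eq _ _ _ _ _ _ _ _ (mem_insert_self i K) (hsum_le _ hsub)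
    have h1 : payout S V β p γ α K i = p i / (γ i * fK) * (V - psum p K) :=
      payout_not_mem_eq _ _ _ _ _ _ _ _ hiK hpK
    have hle := hNash i hiS
    rw [hdev, h1, h2] at hle
    have hD : 0 < γ i * fK := mul_pos (hγ i hiS) hfK
    rw [div_mul_eq_mul_div, le_div_iff₀ hD] at hle
    have h3 := le_of_mul_le_mul_left hle (hp i hiS)
    rw [hVK] at h3
    exact le_of_mul_le_mul_right (by linarith) hfK
  -- the set J of cash-out players with γ = g
  set J := K.filter (fun j => γ j ≤ g) with hJdef
  have hJprop : ∀ j ∈ J, γ j = g ∧ p j = g * α j := by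
    intro j hj
    rw [hJdef, mem_filter] at hj
    obtain ⟨hjK, hjle⟩ := hj
    have hjS := hKS hjK
    have h1 := hcash j hjK
    have h2 := hsolv j hjS
    have hαj := hα j hjS
    have hγj : γ j = g := by nlinarith [hfK]
    rw [hγj] at h1 h2
    exact ⟨hγj, by nlinarith⟩
  -- the threshold set T
  set T := S.filter (fun k => g < γ k) with hTdef
  have hTS : T ⊆ S := filter_subset _ _
  have hTK : T ⊆ K := by
    intro k hk
    rw [hTdef, mem_filter] at hk
    by_contra hkK
    exact absurd (hconv k hk.1 hkK) (not_le.mpr hk.2)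
  have hKT : ∀ k ∈ K, k ∉ T → k ∈ J := by
    intro k hk hkT
    rw [hJdef, mem_filter]
    refine ⟨hk, ?_⟩
    by_contra hle
    exact hkT (by rw [hTdef, mem_filter]; exact ⟨hKS hk, not_le.1 hle⟩)
  have hSdT : S \ T = (S \ K) ∪ J := by
    ext x
    simp only [hTdef, hJdef, mem_sdiff, mem_union, mem_filter, not_and, not_lt]
    constructor
    · rintro ⟨hxS, hx⟩
      by_cases hxK : x ∈ K
      · exact Or.inr ⟨hxK, hx hxS⟩
      · exact Or.inl ⟨hxS, hxK⟩
    · rintro (⟨hxS, hxK⟩ | ⟨hxK, hxg⟩)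
      · exact ⟨hxS, fun _ => hconv x hxS hxK⟩
      · exact ⟨hKS hxK, fun _ => hxg⟩
  have hdisj : Disjoint (S \ K) J := by
    have hjk : J ⊆ K := by rw [hJdef]; exact filter_subset _ _
    exact disjoint_of_subset_right hjk sdiff_disjoint
  set αJ := ∑ j ∈ J, α j with hαJdef
  have hαJ0 : 0 ≤ αJ := by
    rw [hαJdef]
    refine Finset.sum_nonneg fun j hj => hα j ?_
    rw [hJdef, mem_filter] at hj
    exact hKS hj.1
  set fT := fK + αJ with hfTdef
  have hfT : fval β α (S \ T) = fT := by
    rw [hSdT]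
    unfold fval
    rw [Finset.sum_union hdisj, hfTdef, hfKdef, hαJdef]
    unfold fval; ring
  have hfTpos : 0 < fT := by rw [hfTdef]; linarith
  have hpJ : psum p J = g * αJ := by
    rw [hαJdef, Finset.mul_sum]
    exact Finset.sum_congr rfl fun j hj => (hJprop j hj).2
  have hKdJ : K \ J = T := by
    ext x
    simp only [hTdef, hJdef, mem_sdiff, mem_filter, not_and, not_le]
    constructor
    · rintro ⟨hxK, hx⟩
      exact ⟨hKS hxK, hx hxK⟩
    · intro hxT
      have hxK : x ∈ K := hTK (by rw [hTdef, mem_filter]; exact hxT)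
      exact ⟨hxK, fun _ => hxT.2⟩
  have hpT : psum p T = psum p K - g * αJ := by
    rw [← hKdJ, ← hpJ]
    unfold psum
    exact Finset.sum_sdiff_eq_sub (by rw [hJdef]; exact filter_subset _ _)
  have hpTle : psum p T ≤ V := hsum_le T hTS
  have hVT : V - psum p T = g * fT := by
    rw [hpT, hfTdef]; ring_nf; ring_nf at hVK; linarith
  -- payoff equivalence
  have hpayT : ∀ i ∈ S, payout S V β p γ α K i = payout S V β p γ α T i := by
    intro i hiS
    by_cases hiK : i ∈ K
    · by_cases hiT : i ∈ T
      · rw [payout_mem_eq _ _ _ _ _ _ _ _ hiK hpK, payout_mem_eq _ _ _ _ _ _ _ _ hiT hpTle]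
      · have hiJ := hKT i hiK hiT
        obtain ⟨hγi, _⟩ := hJprop i hiJ
        have hgpos : 0 < g := hγi ▸ hγ i hiS
        have hg1 : g ≠ 0 := hgpos.ne'
        have hf1 : fT ≠ 0 := hfTpos.ne'
        rw [payout_mem_eq _ _ _ _ _ _ _ _ hiK hpK,
            payout_not_mem_eq _ _ _ _ _ _ _ _ hiT hpTle, hfT, hVT, hγi]
        field_simp
    · have hiT : i ∉ T := fun h => hiK (hTK h)
      rw [payout_not_mem_eq _ _ _ _ _ _ _ _ hiK hpK,
          payout_not_mem_eq _ _ _ _ _ _ _ _ hiT hpTle, hfT, hVT, hVK]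
      have hγi := (hγ i hiS).ne'
      have hf1 : fT ≠ 0 := hfTpos.ne'
      have hf2 : fK ≠ 0 := hfK.ne'
      rw [← hfKdef]
      field_simp
  -- T is a Nash equilibrium
  have hTNash : isNash S V β p γ α T := by
    refine ⟨hTS, fun i hiS => ?_⟩
    by_cases hiT : i ∈ T
    · have hdev : deviate T i = T.erase i := if_pos hiT
      have hgi : g < γ i := by
        have := hiT; rw [hTdef, mem_filter] at this; exact this.2
      have hiK := hTK hiT
      have h1 := hcash i hiK
      have hαi := hα i hiS
      have hpi := hp i hiS
      have herase : psum p (T.erase i) = psum p T - p i := psum_erase p T i hiT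
      have hins : fval β α (insert i (S \ T)) = α i + fval β α (S \ T) := by
        unfold fval
        rw [Finset.sum_insert (by simp [hiT])]
        ring
      rw [hdev, payout_mem_eq _ _ _ _ _ _ _ _ hiT hpTle,
          payout_not_mem_eq _ _ _ _ _ _ _ _ (notMem_erase i T)
            (by rw [herase]; linarith),
          herase, aux_sdiff_erase S T i hiS, hins, hfT]
      have hD : 0 < γ i * (α i + fT) := mul_pos (hγ i hiS) (by linarith)
      rw [div_mul_eq_mul_div, div_le_iff₀ hD]
      have hkey : g * fT + p i ≤ γ i * (α i + fT) := by
        rw [hfTdef] at *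
        nlinarith [mul_nonneg (sub_nonneg.2 hgi.le) hαJ0]
      have hVeq : V - (psum p T - p i) = g * fT + p i := by linarith
      rw [hVeq]
      exact mul_le_mul_of_nonneg_left hkey hpi.le
    · have hdev : deviate T i = insert i T := if_neg hiT
      have hγle : γ i ≤ g := by
        by_contra h
        exact hiT (by rw [hTdef, mem_filter]; exact ⟨hiS, not_le.1 h⟩)
      rw [hdev, payout_mem_eq _ _ _ _ _ _ _ _ (mem_insert_self i T)
            (hsum_le _ (insert_subset hiS hTS)),
          payout_not_mem_eq _ _ _ _ _ _ _ _ hiT hpTle, hfT, hVT]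
      have hD : 0 < γ i * fT := mul_pos (hγ i hiS) hfTpos
      rw [div_mul_eq_mul_div, le_div_iff₀ hD]
      exact mul_le_mul_of_nonneg_left
        (mul_le_mul_of_nonneg_right hγle hfTpos.le) (hp i hiS).le
  -- choose the threshold c
  obtain hTe | hTne := T.eq_empty_or_nonempty
  · refine ⟨1 + S.sup' hS γ, ?_⟩
    have hfilter : S.filter (fun k => 1 + S.sup' hS γ ≤ γ k) = T := by
      rw [hTe, Finset.filter_eq_empty_iff]
      intro x hx
      have := Finset.le_sup' γ hx
      push_neg
      linarith
    rw [hfilter]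
    exact ⟨hTNash, hpayT⟩
  · refine ⟨T.inf' hTne γ, ?_⟩
    have hfilter : S.filter (fun k => T.inf' hTne γ ≤ γ k) = T := by
      ext x
      simp only [mem_filter]
      constructor
      · rintro ⟨hxS, hxc⟩
        have hlt : g < T.inf' hTne γ := by
          rw [Finset.lt_inf'_iff]
          intro j hj
          rw [hTdef, mem_filter] at hj
          exact hj.2
        rw [hTdef, mem_filter]
        exact ⟨hxS, lt_of_lt_of_le hlt hxc⟩
      · intro hxT
        exact ⟨hTS hxT, Finset.inf'_le _ hxT⟩
    rw [hfilter]
    exact ⟨hTNash, hpayT⟩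
end

section
/- Assume V ≥ p(S) and that p_i = γ_i·α_i for all i ∈ S (the Pre-Money SAFE case). Then there exists an optimum pure strategy Nash equilibrium: a Nash equilibrium K* such that U_i(K) ≤ U_i(K*) for every Nash equilibrium K and every player i ∈ S. -/
open Finset

variable {ι : Type*} [DecidableEq ι]

section Aux

variable (S : Finset ι) (V β : ℝ) (p γ α : ι → ℝ)

lemma psum_le_V {K : Finset ι} (hK : K ⊆ S) (hp : ∀ i ∈ S, 0 < p i)
    (hge : psum p S ≤ V) : psum p K ≤ V :=
  le_trans (Finset.sum_le_sum_of_subset_of_nonneg hK (fun i hi _ => (hp i hi).le)) hge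

lemma fval_pos {X : Finset ι} (hX : X ⊆ S) (hβ : 0 < β) (hα : ∀ i ∈ S, 0 ≤ α i) :
    0 < fval β α X := by
  have h : 0 ≤ ∑ i ∈ X, α i := Finset.sum_nonneg fun i hi => hα i (hX hi)
  unfold fval; linarith

lemma alpha_pos {i : ι} (hi : i ∈ S) (hp : ∀ i ∈ S, 0 < p i) (hγ : ∀ i ∈ S, 0 < γ i)
    (hpre : ∀ i ∈ S, p i = γ i * α i) : 0 < α i := by
  have h1 := hp i hi; have h2 := hγ i hi; have h3 := hpre i hi
  by_contra hle; push_neg at hle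
  nlinarith

lemma payout_mem {K : Finset ι} (hK : K ⊆ S) {i : ι} (hi : i ∈ K)
    (hp : ∀ i ∈ S, 0 < p i) (hge : psum p S ≤ V) :
    payout S V β p γ α K i = p i := by
  unfold payout
  rw [if_pos hi, if_pos (psum_le_V S V p hK hp hge)]

lemma payout_not_mem {K : Finset ι} (hK : K ⊆ S) {i : ι} (hiS : i ∈ S) (hi : i ∉ K)
    (hβ : 0 < β) (hp : ∀ i ∈ S, 0 < p i) (hγ : ∀ i ∈ S, 0 < γ i) (hα : ∀ i ∈ S, 0 ≤ α i)
    (hge : psum p S ≤ V) (hpre : ∀ i ∈ S, p i = γ i * α i) :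
    payout S V β p γ α K i = α i * gval S V β p α K := by
  unfold payout gval
  rw [if_neg hi, min_eq_left (psum_le_V S V p hK hp hge), hpre i hiS]
  have hf : fval β α (S \ K) ≠ 0 := (fval_pos S β α Finset.sdiff_subset hβ hα).ne'
  have hγi : γ i ≠ 0 := (hγ i hiS).ne'
  field_simp

lemma key_lemma (hβ : 0 < β) (hp : ∀ i ∈ S, 0 < p i) (hγ : ∀ i ∈ S, 0 < γ i)
    (hα : ∀ i ∈ S, 0 ≤ α i) (hpre : ∀ i ∈ S, p i = γ i * α i)
    {K : Finset ι} (hK : K ⊆ S) {i : ι} (hiS : i ∈ S) (hiK : i ∉ K) :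
    (gval S V β p α K ≤ γ i ↔ gval S V β p α (insert i K) ≤ γ i) ∧
    (γ i ≤ gval S V β p α K ↔ γ i ≤ gval S V β p α (insert i K)) ∧
    (gval S V β p α K ≤ gval S V β p α (insert i K) ↔ γ i ≤ gval S V β p α K) ∧
    (gval S V β p α (insert i K) ≤ gval S V β p α K ↔ gval S V β p α (insert i K) ≤ γ i) := by
  have hai : 0 < α i := alpha_pos S p γ α hiS hp hγ hpre
  have hB : 0 < fval β α (S \ K) := fval_pos S β α Finset.sdiff_subset hβ hα
  have hfe : fval β α (S \ insert i K) = fval β α (S \ K) - α i := by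
    rw [Finset.sdiff_insert]
    unfold fval
    rw [← Finset.sum_erase_add (S \ K) α (Finset.mem_sdiff.mpr ⟨hiS, hiK⟩)]
    ring
  have hBa : 0 < fval β α (S \ K) - α i := by
    rw [← hfe]; exact fval_pos S β α Finset.sdiff_subset hβ hα
  have hpe : psum p (insert i K) = psum p K + γ i * α i := by
    unfold psum
    rw [Finset.sum_insert hiK, hpre i hiS]; ring
  set A := V - psum p K with hA
  set B := fval β α (S \ K) with hBdef
  have hg1 : gval S V β p α K = A / B := rfl
  have hg2 : gval S V β p α (insert i K) = (A - γ i * α i) / (B - α i) := by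
    unfold gval
    rw [hpe, hfe, hA]
    ring
  set a := α i
  set c := γ i
  rw [hg1, hg2]
  refine ⟨?_, ?_, ?_, ?_⟩
  · rw [div_le_iff₀ hB, div_le_iff₀ hBa]
    constructor <;> intro h <;> nlinarith
  · rw [le_div_iff₀ hB, le_div_iff₀ hBa]
    constructor <;> intro h <;> nlinarith
  · rw [div_le_div_iff₀ hB hBa, le_div_iff₀ hB]
    constructor <;> intro h
    · have h2 : a * (c * B) ≤ a * A := by nlinarith
      exact le_of_mul_le_mul_left h2 hai
    · have h2 : a * (c * B) ≤ a * A := mul_le_mul_of_nonneg_left h hai.le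
      nlinarith
  · rw [div_le_div_iff₀ hBa hB, div_le_iff₀ hBa]
    constructor <;> intro h
    · have h2 : a * A ≤ a * (c * B) := by nlinarith
      have h3 : A ≤ c * B := le_of_mul_le_mul_left h2 hai
      nlinarith
    · have h3 : A ≤ c * B := by nlinarith
      have h2 : a * A ≤ a * (c * B) := mul_le_mul_of_nonneg_left h3 hai.le
      nlinarith

lemma nash_iff (hβ : 0 < β) (hp : ∀ i ∈ S, 0 < p i) (hγ : ∀ i ∈ S, 0 < γ i)
    (hα : ∀ i ∈ S, 0 ≤ α i) (hge : psum p S ≤ V) (hpre : ∀ i ∈ S, p i = γ i * α i)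
    {K : Finset ι} (hK : K ⊆ S) :
    isNash S V β p γ α K ↔
      ((∀ i ∈ K, gval S V β p α K ≤ γ i) ∧ (∀ i ∈ S, i ∉ K → γ i ≤ gval S V β p α K)) := by
  constructor
  · rintro ⟨-, h⟩
    constructor
    · intro i hiK
      have hiS := hK hiK
      have hai : 0 < α i := alpha_pos S p γ α hiS hp hγ hpre
      have hd := h i hiS
      rw [deviate, if_pos hiK] at hd
      have hK' : K.erase i ⊆ S := (Finset.erase_subset i K).trans hK
      rw [payout_mem S V β p γ α hK hiK hp hge,
        payout_not_mem S V β p γ α hK' hiS (Finset.notMem_erase i K) hβ hp hγ hα hge hpre,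
        hpre i hiS] at hd
      have hle : gval S V β p α (K.erase i) ≤ γ i := by
        have := (mul_le_mul_iff_right₀ hai).mp (by linarith : α i * gval S V β p α (K.erase i) ≤ α i * γ i)
        exact this
      obtain ⟨k1, -, -, -⟩ := key_lemma S V β p γ α hβ hp hγ hα hpre hK' hiS
        (Finset.notMem_erase i K)
      rw [Finset.insert_erase hiK] at k1
      exact k1.mp hle
    · intro i hiS hiK
      have hai : 0 < α i := alpha_pos S p γ α hiS hp hγ hpre
      have hd := h i hiS
      rw [deviate, if_neg hiK] at hd
      have hins : insert i K ⊆ S := Finset.insert_subset hiS hK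
      rw [payout_not_mem S V β p γ α hK hiS hiK hβ hp hγ hα hge hpre,
        payout_mem S V β p γ α hins (Finset.mem_insert_self i K) hp hge,
        hpre i hiS] at hd
      exact (mul_le_mul_iff_right₀ hai).mp (by linarith)
  · rintro ⟨h1, h2⟩
    refine ⟨hK, fun i hiS => ?_⟩
    have hai : 0 < α i := alpha_pos S p γ α hiS hp hγ hpre
    by_cases hiK : i ∈ K
    · rw [deviate, if_pos hiK]
      have hK' : K.erase i ⊆ S := (Finset.erase_subset i K).trans hK
      rw [payout_mem S V β p γ α hK hiK hp hge,
        payout_not_mem S V β p γ α hK' hiS (Finset.notMem_erase i K) hβ hp hγ hα hge hpre,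
        hpre i hiS]
      obtain ⟨k1, -, -, -⟩ := key_lemma S V β p γ α hβ hp hγ hα hpre hK' hiS
        (Finset.notMem_erase i K)
      rw [Finset.insert_erase hiK] at k1
      have hle : gval S V β p α (K.erase i) ≤ γ i := k1.mpr (h1 i hiK)
      nlinarith
    · rw [deviate, if_neg hiK]
      have hins : insert i K ⊆ S := Finset.insert_subset hiS hK
      rw [payout_not_mem S V β p γ α hK hiS hiK hβ hp hγ hα hge hpre,
        payout_mem S V β p γ α hins (Finset.mem_insert_self i K) hp hge,
        hpre i hiS]
      have := h2 i hiS hiK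
      nlinarith

end Aux

/-- pre-money case (`p_i = γ_i·α_i` everywhere) with `V ≥ p(S)`:
there exists an optimum pure strategy Nash equilibrium. -/
theorem stmt18_pre_money_optimum_exists
    (S : Finset ι) (hS : S.Nonempty)
    (V β : ℝ) (hV : 0 < V) (hβ : 0 < β)
    (p γ α : ι → ℝ)
    (hp : ∀ i ∈ S, 0 < p i) (hγ : ∀ i ∈ S, 0 < γ i) (hα : ∀ i ∈ S, 0 ≤ α i)
    (hge : psum p S ≤ V)
    (hpre : ∀ i ∈ S, p i = γ i * α i) :
    ∃ Kstar : Finset ι, isNash S V β p γ α Kstar ∧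
      ∀ K : Finset ι, isNash S V β p γ α K →
        ∀ i ∈ S, payout S V β p γ α K i ≤ payout S V β p γ α Kstar i := by
  classical
  obtain ⟨K0, hK0mem, hK0min⟩ := S.powerset.exists_min_image (gval S V β p α)
    ⟨∅, Finset.mem_powerset.mpr (Finset.empty_subset S)⟩
  have hK0S : K0 ⊆ S := Finset.mem_powerset.mp hK0mem
  have hK0nash : isNash S V β p γ α K0 := by
    rw [nash_iff S V β p γ α hβ hp hγ hα hge hpre hK0S]
    constructor
    · intro i hiK
      have hiS := hK0S hiK
      have hK' : K0.erase i ⊆ S := (Finset.erase_subset i K0).trans hK0S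
      have hmin := hK0min (K0.erase i) (Finset.mem_powerset.mpr hK')
      obtain ⟨-, -, -, k4⟩ := key_lemma S V β p γ α hβ hp hγ hα hpre hK' hiS
        (Finset.notMem_erase i K0)
      rw [Finset.insert_erase hiK] at k4
      exact k4.mp hmin
    · intro i hiS hiK
      have hmin := hK0min (insert i K0)
        (Finset.mem_powerset.mpr (Finset.insert_subset hiS hK0S))
      obtain ⟨-, -, k3, -⟩ := key_lemma S V β p γ α hβ hp hγ hα hpre hK0S hiS hiK
      exact k3.mp hmin
  obtain ⟨Ks, hKsmem, hKsmax⟩ :=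
    (S.powerset.filter (fun K => isNash S V β p γ α K)).exists_max_image (gval S V β p α)
      ⟨K0, Finset.mem_filter.mpr ⟨hK0mem, hK0nash⟩⟩
  have hKsnash : isNash S V β p γ α Ks := (Finset.mem_filter.mp hKsmem).2
  have hKsS : Ks ⊆ S := hKsnash.1
  refine ⟨Ks, hKsnash, ?_⟩
  intro K hKnash i hiS
  have hKS : K ⊆ S := hKnash.1
  have hgmax : gval S V β p α K ≤ gval S V β p α Ks :=
    hKsmax K (Finset.mem_filter.mpr ⟨Finset.mem_powerset.mpr hKS, hKnash⟩)
  have hai : 0 < α i := alpha_pos S p γ α hiS hp hγ hpre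
  obtain ⟨hN1, hN2⟩ := (nash_iff S V β p γ α hβ hp hγ hα hge hpre hKS).mp hKnash
  obtain ⟨hM1, hM2⟩ := (nash_iff S V β p γ α hβ hp hγ hα hge hpre hKsS).mp hKsnash
  by_cases h1 : i ∈ K <;> by_cases h2 : i ∈ Ks
  · rw [payout_mem S V β p γ α hKS h1 hp hge, payout_mem S V β p γ α hKsS h2 hp hge]
  · rw [payout_mem S V β p γ α hKS h1 hp hge,
      payout_not_mem S V β p γ α hKsS hiS h2 hβ hp hγ hα hge hpre, hpre i hiS]
    have := hM2 i hiS h2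
    nlinarith
  · rw [payout_not_mem S V β p γ α hKS hiS h1 hβ hp hγ hα hge hpre,
      payout_mem S V β p γ α hKsS h2 hp hge, hpre i hiS]
    have hg1 := hM1 i h2
    have hg2 := hN2 i hiS h1
    nlinarith
  · rw [payout_not_mem S V β p γ α hKS hiS h1 hβ hp hγ hα hge hpre,
      payout_not_mem S V β p γ α hKsS hiS h2 hβ hp hγ hα hge hpre]
    exact mul_le_mul_of_nonneg_left hgmax hai.le
end
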